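/- Suppose that F is an r-graph on m vertices and P is a minimal pattern such that (F,P) is a Turán pair and F is edge-stable and weakly vertex-extendable with respect to P. Then there exists a constant c > 0 such that for all sufficiently large n, F is (c·C(n−1,r−1), ((1−π(F))/(8m))·C(n−1,r−1))-bounded; that is, every n-vertex F-free r-graph H with average degree d(H) ≥ d(n,F) − c·C(n−1,r−1) satisfies Δ(H) ≤ d(n,F) + ((1−π(F))/(8m))·C(n−1,r−1). -/

import Mathlib

open Filter

namespace DensityCH

/-- An `r`-uniform hypergraph with vertices in `ℕ`:
a finite vertex set together with a set of `r`-element edges. -/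
structure HGraph (r : ℕ) where
  verts : Finset ℕ
  edges : Finset (Finset ℕ)
  edges_sub : ∀ e ∈ edges, e ⊆ verts
  edges_card : ∀ e ∈ edges, e.card = r

namespace HGraph

/-- Build an `r`-graph from a vertex set and a set of candidate edges,
keeping exactly the well-formed candidates. -/
def ofEdges (r : ℕ) (V : Finset ℕ) (E : Finset (Finset ℕ)) : HGraph r where
  verts := V
  edges := E.filter fun e => e ⊆ V ∧ e.card = r
  edges_sub := fun e he => ((Finset.mem_filter.mp he).2).1
  edges_card := fun e he => ((Finset.mem_filter.mp he).2).2

variable {r : ℕ}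

/-- `H` contains a copy of `F`, i.e. a subgraph isomorphic to `F`. -/
def IsCopyIn (F H : HGraph r) : Prop :=
  ∃ f : ℕ → ℕ, Set.InjOn f ↑F.verts ∧ (∀ v ∈ F.verts, f v ∈ H.verts) ∧
    ∀ e ∈ F.edges, e.image f ∈ H.edges

/-- The subgraph of `H` induced on `S`. -/
def induce (H : HGraph r) (S : Finset ℕ) : HGraph r :=
  ofEdges r (H.verts ∩ S) (H.edges.filter fun e => e ⊆ S)

/-- Delete a vertex from `H`. -/
def deleteVert (H : HGraph r) (v : ℕ) : HGraph r :=
  ofEdges r (H.verts.erase v) (H.edges.filter fun e => v ∉ e)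

/-- The degree of a vertex. -/
def deg (H : HGraph r) (v : ℕ) : ℕ := (H.edges.filter fun e => v ∈ e).card

/-- The maximum degree `Δ(H)`. -/
def maxDeg (H : HGraph r) : ℕ := H.verts.sup H.deg

/-- The minimum degree `δ(H)`. -/
def minDeg (H : HGraph r) : ℕ :=
  if h : H.verts.Nonempty then H.verts.inf' h H.deg else 0

/-- The average degree `d(H) = r·|E(H)|/|V(H)|`. -/
noncomputable def avgDeg (H : HGraph r) : ℝ :=
  (r : ℝ) * (H.edges.card : ℝ) / (H.verts.card : ℝ)

/-- `H` contains `k` pairwise vertex-disjoint copies of `F`, i.e. `ν(F,H) ≥ k`. -/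
def HasMatching (F H : HGraph r) (k : ℕ) : Prop :=
  ∃ S : Fin k → Finset ℕ,
    (∀ i, S i ⊆ H.verts ∧ (S i).card = F.verts.card) ∧
    (∀ i j, i ≠ j → Disjoint (S i) (S j)) ∧
    ∀ i, F.IsCopyIn (H.induce (S i))

/-- Isomorphism of hypergraphs. -/
def Iso (G H : HGraph r) : Prop :=
  ∃ f : ℕ → ℕ, Set.BijOn f ↑G.verts ↑H.verts ∧
    ∀ e ∈ Finset.powersetCard r G.verts, (e ∈ G.edges ↔ e.image f ∈ H.edges)

/-- The join `G ⋈ H`: all edges of `G`, all edges of `H`, and all `r`-sets meeting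
both vertex sets. -/
def join (G H : HGraph r) : HGraph r :=
  ofEdges r (G.verts ∪ H.verts)
    (G.edges ∪ H.edges ∪ ((Finset.powersetCard r (G.verts ∪ H.verts)).filter
      fun e => (e ∩ G.verts).Nonempty ∧ (e ∩ H.verts).Nonempty))

end HGraph

/-- The complete `r`-graph on a vertex set `S`. -/
def completeOn (r : ℕ) (S : Finset ℕ) : HGraph r :=
  HGraph.ofEdges r S (Finset.powersetCard r S)

/-- The `r`-graph on `V` with no edges. -/
def emptyOn (r : ℕ) (V : Finset ℕ) : HGraph r := HGraph.ofEdges r V ∅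

/-- The Turán number `ex(n,F)`. -/
noncomputable def exN (r n : ℕ) (F : HGraph r) : ℕ :=
  sSup {m | ∃ H : HGraph r, H.verts.card = n ∧ ¬ F.IsCopyIn H ∧ H.edges.card = m}

/-- `d(n,F) = r·ex(n,F)/n`. -/
noncomputable def dN (r n : ℕ) (F : HGraph r) : ℝ := (r : ℝ) * (exN r n F : ℝ) / (n : ℝ)

/-- `δ(n,F) = ex(n,F) − ex(n−1,F)` (as a real number). -/
noncomputable def deltaN (r n : ℕ) (F : HGraph r) : ℝ := (exN r n F : ℝ) - (exN r (n-1) F : ℝ)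

/-- `x` is the Turán density `π(F)`, i.e. the limit of `ex(n,F)/C(n,r)`. -/
def HasTuranDensity (r : ℕ) (F : HGraph r) (x : ℝ) : Prop :=
  Tendsto (fun n : ℕ => (exN r n F : ℝ) / (n.choose r : ℝ)) atTop (nhds x)

/-- `ex(n,(t+1)F)`: the maximum number of edges of an `n`-vertex `r`-graph with no
`t+1` pairwise vertex-disjoint copies of `F`. -/
noncomputable def exMatchN (r n t : ℕ) (F : HGraph r) : ℕ :=
  sSup {m | ∃ H : HGraph r, H.verts.card = n ∧ ¬ F.HasMatching H (t+1) ∧ H.edges.card = m}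

/-- `H ∈ EX(n,F)`. -/
def IsExtremalFree (r n : ℕ) (F H : HGraph r) : Prop :=
  H.verts.card = n ∧ ¬ F.IsCopyIn H ∧ H.edges.card = exN r n F

/-- `H ∈ EX(n,(t+1)F)`. -/
def IsExtremalMatchingFree (r n t : ℕ) (F H : HGraph r) : Prop :=
  H.verts.card = n ∧ ¬ F.HasMatching H (t+1) ∧ H.edges.card = exMatchN r n t F

/-- `F` is `(f1, f2)`-bounded at `n`. -/
def BoundedAt (r n : ℕ) (F : HGraph r) (f1 f2 : ℝ) : Prop :=
  ∀ H : HGraph r, H.verts.card = n → ¬ F.IsCopyIn H →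
    dN r n F - f1 ≤ H.avgDeg → (H.maxDeg : ℝ) ≤ dN r n F + f2

/-- `ex(·,F)` is `g`-smooth at `n`: `|δ(n,F) − d(n−1,F)| ≤ g(n)`. -/
def SmoothAt (r n : ℕ) (F : HGraph r) (g : ℝ) : Prop :=
  |deltaN r n F - dN r (n-1) F| ≤ g

/-- The collection `H 0, …, H t` (on a common vertex set) has a rainbow `F`-matching. -/
def HasRainbowMatching (r t : ℕ) (F : HGraph r) (H : Fin (t+1) → HGraph r) : Prop :=
  ∃ S : Fin (t+1) → Finset ℕ,
    (∀ i, S i ⊆ (H i).verts ∧ (S i).card = F.verts.card) ∧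
    (∀ i j, i ≠ j → Disjoint (S i) (S j)) ∧
    ∀ i, F.IsCopyIn ((H i).induce (S i))

/-!  Patterns -/

/-- An `r`-uniform pattern: a finite index set together with a collection of
`r`-multisets on it. -/
structure Pattern (r : ℕ) where
  idx : Finset ℕ
  mE : Finset (Multiset ℕ)
  card_eq : ∀ s ∈ mE, Multiset.card s = r
  mem_idx : ∀ s ∈ mE, ∀ i ∈ s, i ∈ idx

namespace Pattern

variable {r : ℕ}

/-- The pattern `P − i`. -/
def erase (P : Pattern r) (i : ℕ) : Pattern r where
  idx := P.idx.erase i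
  mE := P.mE.filter fun s => i ∉ s
  card_eq := fun s hs => P.card_eq s (Finset.mem_filter.mp hs).1
  mem_idx := by
    intro s hs j hj
    have h1 := Finset.mem_filter.mp hs
    refine Finset.mem_erase.mpr ⟨?_, P.mem_idx s h1.1 j hj⟩
    rintro rfl
    exact h1.2 hj

/-- `H` is a `P`-construction: a blowup of the pattern `P`. -/
def IsConstruction (P : Pattern r) (H : HGraph r) : Prop :=
  ∃ part : ℕ → ℕ, (∀ v ∈ H.verts, part v ∈ P.idx) ∧
    ∀ e : Finset ℕ, e ∈ H.edges ↔ (e ⊆ H.verts ∧ e.card = r ∧ Multiset.map part e.val ∈ P.mE)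

/-- `H` is a `P`-subconstruction: a subgraph of a `P`-construction. -/
def IsSubconstruction (P : Pattern r) (H : HGraph r) : Prop :=
  ∃ G : HGraph r, P.IsConstruction G ∧ H.verts ⊆ G.verts ∧ H.edges ⊆ G.edges

end Pattern

/-- `Λ(P,n)`: the maximum number of edges of an `n`-vertex `P`-construction. -/
noncomputable def patEx (r : ℕ) (P : Pattern r) (n : ℕ) : ℕ :=
  sSup {m | ∃ H : HGraph r, P.IsConstruction H ∧ H.verts.card = n ∧ H.edges.card = m}

/-- The Lagrangian `λ(P) = lim Λ(P,n)/C(n,r)`. -/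
noncomputable def patLagrangian (r : ℕ) (P : Pattern r) : ℝ :=
  limUnder atTop fun n : ℕ => (patEx r P n : ℝ) / (n.choose r : ℝ)

/-- The pattern `P` is minimal: `λ(P−i) < λ(P)` for all `i`. -/
def Pattern.Minimal {r : ℕ} (P : Pattern r) : Prop :=
  ∀ i ∈ P.idx, patLagrangian r (P.erase i) < patLagrangian r P

/-- `(F,P)` is a Turán pair. -/
def IsTuranPair (r : ℕ) (F : HGraph r) (P : Pattern r) : Prop :=
  (∀ H : HGraph r, P.IsConstruction H → ¬ F.IsCopyIn H) ∧
  (∀ H : HGraph r, ¬ F.IsCopyIn H → H.edges.card = exN r H.verts.card F →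
    P.IsConstruction H)

/-- `F` is edge-stable with respect to `P` (with Turán density `π`). -/
def EdgeStable (r : ℕ) (F : HGraph r) (P : Pattern r) (π : ℝ) : Prop :=
  ∀ δ : ℝ, 0 < δ → ∃ N₀ : ℕ, ∃ ζ : ℝ, 0 < ζ ∧
    ∀ H : HGraph r, N₀ ≤ H.verts.card → ¬ F.IsCopyIn H →
      (π - ζ) * (H.verts.card.choose r : ℝ) ≤ (H.edges.card : ℝ) →
      ∃ H' : HGraph r, H'.verts ⊆ H.verts ∧ H'.edges ⊆ H.edges ∧
        (π - δ) * (H.verts.card.choose r : ℝ) ≤ (H'.edges.card : ℝ) ∧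
        P.IsSubconstruction H'

/-- `F` is weakly vertex-extendable with respect to `P` (with Turán density `π`). -/
def WeaklyVertexExtendable (r : ℕ) (F : HGraph r) (P : Pattern r) (π : ℝ) : Prop :=
  ∀ δ : ℝ, 0 < δ → ∃ N₀ : ℕ, ∃ ζ : ℝ, 0 < ζ ∧
    ∀ H : HGraph r, N₀ ≤ H.verts.card → ¬ F.IsCopyIn H →
      (π - ζ) * (((H.verts.card - 1).choose (r-1) : ℕ) : ℝ) ≤ (H.minDeg : ℝ) →
      ∀ v ∈ H.verts, P.IsSubconstruction (H.deleteVert v) →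
        (H.deg v : ℝ) ≤ (π + δ) * (((H.verts.card - 1).choose (r-1) : ℕ) : ℝ)

/-- `F` is degree-stable with respect to `P` (with Turán density `π`). -/
def DegreeStable (r : ℕ) (F : HGraph r) (P : Pattern r) (π : ℝ) : Prop :=
  ∃ ζ : ℝ, 0 < ζ ∧ ∃ N₀ : ℕ,
    ∀ H : HGraph r, N₀ ≤ H.verts.card → ¬ F.IsCopyIn H →
      (π - ζ) * (((H.verts.card - 1).choose (r-1) : ℕ) : ℝ) ≤ (H.minDeg : ℝ) →
      P.IsSubconstruction H

/-!  Concrete constructions -/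

/-- The generalized Turán graph `T_r(·,ℓ)` on vertex set `V` (parts are residue
classes mod `ℓ`; on an interval these are balanced). -/
def turanOn (r ℓ : ℕ) (V : Finset ℕ) : HGraph r :=
  HGraph.ofEdges r V ((Finset.powersetCard r V).filter
    fun e => ∀ u ∈ e, ∀ v ∈ e, u % ℓ = v % ℓ → u = v)

/-- The `r`-graph on `V₁ ∪ V₂` whose edges are all `r`-sets meeting both parts. -/
def crossOn (r : ℕ) (V₁ V₂ : Finset ℕ) : HGraph r :=
  HGraph.ofEdges r (V₁ ∪ V₂) ((Finset.powersetCard r (V₁ ∪ V₂)).filter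
    fun e => (e ∩ V₁).Nonempty ∧ (e ∩ V₂).Nonempty)

/-- The `r`-graph on `V₁ ∪ V₂` whose edges are all `r`-sets meeting `V₁` in an odd
number of vertices. -/
def oddCross (r : ℕ) (V₁ V₂ : Finset ℕ) : HGraph r :=
  HGraph.ofEdges r (V₁ ∪ V₂) ((Finset.powersetCard r (V₁ ∪ V₂)).filter
    fun e => Odd (e ∩ V₁).card)

/-- The Fano plane. -/
def fano : HGraph 3 :=
  HGraph.ofEdges 3 (Finset.Icc 1 7)
    {({1,2,3} : Finset ℕ), {3,4,5}, {5,6,1}, {1,7,4}, {2,7,5}, {3,7,6}, {2,4,6}}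

/-- The generalized triangle `𝕋_r`, with edges `{1,…,r}`, `{1,…,r−1,r+1}` and
`{r,…,2r−1}`. -/
def genTri (r : ℕ) : HGraph r :=
  HGraph.ofEdges r (Finset.Icc 1 (2*r - 1))
    {Finset.Icc 1 r, Finset.Icc 1 (r-1) ∪ {r+1}, Finset.Icc r (2*r - 1)}

/-- `G` is a blowup of the `r`-graph `W` (viewing `W` as a pattern). -/
def IsBlowupOf {r : ℕ} (W G : HGraph r) : Prop :=
  ∃ part : ℕ → ℕ, (∀ v ∈ G.verts, part v ∈ W.verts) ∧
    ∀ e : Finset ℕ, e ∈ G.edges ↔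
      (e ⊆ G.verts ∧ e.card = r ∧ ∃ f ∈ W.edges, Multiset.map part e.val = f.val)

/-- The expansion `H^F` of an `r`-graph `F`: for every pair of vertices not covered
by an edge of `F`, add an edge consisting of this pair plus `r−2` new vertices,
these sets of new vertices being pairwise disjoint. -/
def HGraph.expansion {r : ℕ} (F : HGraph r) : HGraph r :=
  HGraph.ofEdges r
    (F.verts ∪ (((F.verts ×ˢ F.verts).filter fun p =>
        p.1 < p.2 ∧ ∀ e ∈ F.edges, ¬ (p.1 ∈ e ∧ p.2 ∈ e)).biUnion fun p =>
      (Finset.range (r-2)).image fun s =>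
        (F.verts.sup id + 1) + (p.1 * (F.verts.sup id + 1) + p.2) * r + s))
    (F.edges ∪ (((F.verts ×ˢ F.verts).filter fun p =>
        p.1 < p.2 ∧ ∀ e ∈ F.edges, ¬ (p.1 ∈ e ∧ p.2 ∈ e)).image fun p =>
      insert p.1 (insert p.2 ((Finset.range (r-2)).image fun s =>
        (F.verts.sup id + 1) + (p.1 * (F.verts.sup id + 1) + p.2) * r + s))))

/-- A `2`-graph is a tree on `k` vertices: `k` vertices, `k−1` edges, connected. -/
def IsTreeGraph (k : ℕ) (T : HGraph 2) : Prop :=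
  T.verts.card = k ∧ T.edges.card = k - 1 ∧
  ∀ S : Finset ℕ, S ⊆ T.verts → S.Nonempty → S ≠ T.verts →
    ∃ e ∈ T.edges, (e ∩ S).Nonempty ∧ (e \ S).Nonempty

/-- `T` satisfies the Erdős–Sós property for `k`: every graph with average degree
greater than `k−2` contains `T`. -/
def ErdosSos (k : ℕ) (T : HGraph 2) : Prop :=
  ∀ G : HGraph 2, ((k : ℝ) - 2) * (G.verts.card : ℝ) < 2 * (G.edges.card : ℝ) →
    T.IsCopyIn G

/-- The `(r−2)`-expansion `Exp(T)` of a `2`-graph `T`: enlarge every edge by one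
common fixed set of `r−2` new vertices. -/
def expTree (r : ℕ) (T : HGraph 2) : HGraph r :=
  HGraph.ofEdges r
    (T.verts ∪ ((Finset.range (r-2)).image fun s => T.verts.sup id + 1 + s))
    (T.edges.image fun e =>
      e ∪ ((Finset.range (r-2)).image fun s => T.verts.sup id + 1 + s))

/-- The chromatic number of a `2`-graph. -/
noncomputable def chrom (F : HGraph 2) : ℕ :=
  sInf {k | ∃ c : ℕ → ℕ, (∀ v ∈ F.verts, c v < k) ∧
    ∀ e ∈ F.edges, ∀ u ∈ e, ∀ v ∈ e, u ≠ v → c u ≠ c v}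

/-- A graph is edge-critical if deleting some edge lowers its chromatic number. -/
def EdgeCritical (F : HGraph 2) : Prop :=
  ∃ e ∈ F.edges, chrom (HGraph.ofEdges 2 F.verts (F.edges.erase e)) < chrom F

/-- `H` is semibipartite: the vertex set splits into `V₁ ∪ V₂` so that every edge
has exactly one vertex in `V₁`. -/
def Semibipartite (r : ℕ) (H : HGraph r) : Prop :=
  ∃ V₁ ⊆ H.verts, ∀ e ∈ H.edges, (e ∩ V₁).card = 1

/-- `H` is a `K_ℓ^r`-subconstruction, i.e. an `ℓ`-partite `r`-graph. -/
def IsKlSub (r ℓ : ℕ) (H : HGraph r) : Prop :=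
  ∃ f : ℕ → ℕ, (∀ v ∈ H.verts, f v < ℓ) ∧
    ∀ e ∈ H.edges, ∀ u ∈ e, ∀ v ∈ e, f u = f v → u = v

/-- The Lagrangian `λ(W)` of an `r`-graph `W`, viewing `W` as a pattern. -/
noncomputable def hgLagrangian (r : ℕ) (W : HGraph r) : ℝ :=
  limUnder atTop fun n : ℕ =>
    ((sSup {m | ∃ G : HGraph r, IsBlowupOf W G ∧ G.verts.card = n ∧ G.edges.card = m} : ℕ) : ℝ)
      / (n.choose r : ℝ)

/-- The `r`-graph `B(r,ℓ+1)`. -/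
def BGraph (r ℓ : ℕ) : HGraph r :=
  HGraph.ofEdges r (Finset.Icc 1 (ℓ+1))
    (insert (Finset.Icc 1 r)
      ((Finset.powersetCard r (Finset.Icc 2 (ℓ+1))).filter
        fun e => (e ∩ Finset.Icc 2 r).card ≤ 1))

/-- The `r`-uniform matching of size two, `M_2^r`. -/
def matching2 (r : ℕ) : HGraph r :=
  HGraph.ofEdges r (Finset.Icc 1 (2*r)) {Finset.Icc 1 r, Finset.Icc (r+1) (2*r)}

/-- The expanded triangle `𝓒_3^{2r}`. -/
def expandedTriangle (r : ℕ) : HGraph (2*r) :=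
  HGraph.ofEdges (2*r) (Finset.Icc 1 (3*r))
    {Finset.Icc 1 (2*r), Finset.Icc (r+1) (3*r), Finset.Icc 1 r ∪ Finset.Icc (2*r+1) (3*r)}

/-- The `4`-graph `𝔽_{4,3}`. -/
def F43 : HGraph 4 :=
  HGraph.ofEdges 4 (Finset.Icc 1 7)
    {({1,2,3,4} : Finset ℕ), {1,2,3,5}, {1,2,3,6}, {1,2,3,7}, {4,5,6,7}}

/-- The `3`-graph `𝔽_{3,2}`. -/
def F32 : HGraph 3 :=
  HGraph.ofEdges 3 (Finset.Icc 1 5)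
    {({1,2,3} : Finset ℕ), {1,2,4}, {1,2,5}, {3,4,5}}

/-- `H` contains pairwise vertex-disjoint copies of `F i`, `ts i` many of each. -/
def HasMixedMatching (r k : ℕ) (F : Fin k → HGraph r) (ts : Fin k → ℕ)
    (H : HGraph r) : Prop :=
  ∃ S : (i : Fin k) → Fin (ts i) → Finset ℕ,
    (∀ i j, S i j ⊆ H.verts ∧ (S i j).card = (F i).verts.card) ∧
    (∀ p q : Σ i : Fin k, Fin (ts i), p ≠ q → Disjoint (S p.1 p.2) (S q.1 q.2)) ∧
    ∀ i j, (F i).IsCopyIn (H.induce (S i j))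

/-- `ex(n, ⊔ᵢ tᵢ Fᵢ)`. -/
noncomputable def exMixedN (r k : ℕ) (F : Fin k → HGraph r) (ts : Fin k → ℕ)
    (n : ℕ) : ℕ :=
  sSup {m | ∃ H : HGraph r, H.verts.card = n ∧ ¬ HasMixedMatching r k F ts H ∧
    H.edges.card = m}

/-- `ex(n, {F₁,…,F_k})`. -/
noncomputable def exFamN (r k : ℕ) (F : Fin k → HGraph r) (n : ℕ) : ℕ :=
  sSup {m | ∃ H : HGraph r, H.verts.card = n ∧ (∀ i, ¬ (F i).IsCopyIn H) ∧
    H.edges.card = m}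

/-!
Let `H` be `F`-free on `n` vertices with almost `ex(n, F)` edges and let `u` be a vertex of large
degree. Edge-stability gives a `P`-subconstruction `H' ⊆ H` missing few edges. Add back the edges
of `H` at `u` and repeatedly delete a vertex `v ≠ u` of degree below `(π - ζ)·C(|W| - 1, r - 1)`
in the current graph `H[W]`. The surplus `e(H[W]) - (π - ζ)·C(|W|, r)` never decreases; it starts
near `ζ·C(n, r)`, while on `k` vertices it is at most `ex(k, F) - (π - ζ)·C(k, r) ≈ ζ·C(k, r)`, so
fewer than `T ≈ ζ n / (8r)` vertices are deleted. The remaining graph has high minimum degree and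
is a `P`-subconstruction after removing `u`, so weak vertex-extendability bounds the degree of `u`
in it by `(π + ε/2)·C(n - 1, r - 1)`, and the deleted vertices account for at most
`T (r - 1)/(n - 1)·C(n - 1, r - 1)` further edges at `u`.
-/

open Finset

namespace HGraph

variable {r : ℕ}

lemma edges_subset_powersetCard (H : HGraph r) : H.edges ⊆ powersetCard r H.verts :=
  fun e he => mem_powersetCard.2 ⟨H.edges_sub e he, H.edges_card e he⟩

lemma card_edges_le_choose (H : HGraph r) : #H.edges ≤ (#H.verts).choose r := by
  simpa using card_le_card H.edges_subset_powersetCard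

lemma induce_edges (H : HGraph r) (S : Finset ℕ) : (H.induce S).edges = {e ∈ H.edges | e ⊆ S} := by
  ext e
  simp only [induce, ofEdges, mem_filter, subset_inter_iff]
  exact ⟨fun h => h.1, fun h => ⟨h, ⟨H.edges_sub e h.1, h.2⟩, H.edges_card e h.1⟩⟩

lemma induce_verts_self (H : HGraph r) : (H.induce H.verts).edges = H.edges := by
  rw [induce_edges]
  exact filter_true_of_mem H.edges_sub

lemma card_verts_induce (H : HGraph r) {S : Finset ℕ} (hS : S ⊆ H.verts) :
    #(H.induce S).verts = #S := by
  simp [induce, ofEdges, inter_eq_right.2 hS]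

lemma deleteVert_edges (H : HGraph r) (v : ℕ) :
    (H.deleteVert v).edges = {e ∈ H.edges | v ∉ e} := by
  ext e
  simp only [deleteVert, ofEdges, mem_filter]
  refine ⟨fun h => h.1, fun h => ⟨h, fun x hx => mem_erase.2 ⟨?_, H.edges_sub e h.1 hx⟩,
    H.edges_card e h.1⟩⟩
  rintro rfl
  exact h.2 hx

lemma deg_induce (H : HGraph r) (S : Finset ℕ) (v : ℕ) :
    (H.induce S).deg v = #{e ∈ H.edges | e ⊆ S ∧ v ∈ e} := by
  rw [deg, induce_edges, filter_filter]

lemma IsCopyIn.mono {F G H : HGraph r} (hF : F.IsCopyIn G) (hV : G.verts ⊆ H.verts)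
    (hE : G.edges ⊆ H.edges) : F.IsCopyIn H := by
  obtain ⟨f, hinj, hv, he⟩ := hF
  exact ⟨f, hinj, fun v hv' => hV (hv v hv'), fun e he' => hE (he e he')⟩

lemma IsCopyIn.of_induce {F H : HGraph r} {S : Finset ℕ} (hF : F.IsCopyIn (H.induce S)) :
    F.IsCopyIn H :=
  hF.mono inter_subset_left (by rw [induce_edges]; exact filter_subset _ _)

lemma IsCopyIn.of_deleteVert {F H : HGraph r} {v : ℕ} (hF : F.IsCopyIn (H.deleteVert v)) :
    F.IsCopyIn H :=
  hF.mono (erase_subset _ _) (by rw [deleteVert_edges]; exact filter_subset _ _)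

lemma isCopyIn_of_card_le {F H : HGraph r} (hcard : #F.verts ≤ #H.verts)
    (hH : F.edges.Nonempty → powersetCard r H.verts ⊆ H.edges) : F.IsCopyIn H := by
  obtain ⟨f, hmaps, hinj⟩ := Set.Finite.exists_injOn_of_encard_le F.verts.finite_toSet
    (t := (H.verts : Set ℕ)) (by simpa using hcard)
  refine ⟨f, hinj, fun v hv => hmaps hv, fun e he => hH ⟨e, he⟩ (mem_powersetCard.2 ⟨?_, ?_⟩)⟩
  · exact image_subset_iff.2 fun x hx => hmaps (F.edges_sub e he hx)
  · rw [card_image_of_injOn (hinj.mono (by exact_mod_cast F.edges_sub e he)), F.edges_card e he]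

lemma maxDeg_le {H : HGraph r} {x : ℝ} (hx : 0 ≤ x) (h : ∀ v ∈ H.verts, (H.deg v : ℝ) ≤ x) :
    (H.maxDeg : ℝ) ≤ x :=
  le_trans (by exact_mod_cast Finset.sup_le fun v hv => Nat.le_floor (h v hv)) (Nat.floor_le hx)

lemma le_minDeg {H : HGraph r} (hne : H.verts.Nonempty) {x : ℝ}
    (h : ∀ v ∈ H.verts, x ≤ H.deg v) : x ≤ H.minDeg := by
  rw [minDeg, dif_pos hne]
  exact (Nat.le_ceil x).trans (by exact_mod_cast le_inf' _ _ fun v hv => Nat.ceil_le.2 (h v hv))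

end HGraph

open HGraph

section TuranNumber

variable {r : ℕ}

lemma bddAbove_exN (F : HGraph r) (n : ℕ) :
    BddAbove {m | ∃ H : HGraph r, #H.verts = n ∧ ¬ F.IsCopyIn H ∧ #H.edges = m} :=
  ⟨n.choose r, by rintro _ ⟨H, rfl, -, rfl⟩; exact H.card_edges_le_choose⟩

lemma card_edges_le_exN {F H : HGraph r} (hfree : ¬ F.IsCopyIn H) :
    #H.edges ≤ exN r #H.verts F :=
  le_csSup (bddAbove_exN F _) ⟨H, rfl, hfree, rfl⟩

lemma exN_le_choose (F : HGraph r) (n : ℕ) : exN r n F ≤ n.choose r :=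
  csSup_le' (by rintro _ ⟨H, rfl, -, rfl⟩; exact H.card_edges_le_choose)

lemma exists_isExtremalFree {F : HGraph r} (hF : F.edges.Nonempty) (n : ℕ) :
    ∃ H, IsExtremalFree r n F H := by
  have hfree : ¬ F.IsCopyIn (emptyOn r (range n)) := by
    rintro ⟨f, -, -, hf⟩
    obtain ⟨e, he⟩ := hF
    simpa [emptyOn, ofEdges] using hf e he
  have hmem : 0 ∈ {m | ∃ H : HGraph r, #H.verts = n ∧ ¬ F.IsCopyIn H ∧ #H.edges = m} :=
    ⟨_, by simp [emptyOn, ofEdges], hfree, by simp [emptyOn, ofEdges]⟩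
  obtain ⟨H, hH⟩ := Nat.sSup_mem ⟨0, hmem⟩ (bddAbove_exN F n)
  exact ⟨H, hH⟩

lemma exN_lt_choose {F : HGraph r} (hF : F.edges.Nonempty) {n : ℕ} (hn : #F.verts ≤ n) :
    exN r n F < n.choose r := by
  obtain ⟨H, hH, hfree, hcard⟩ := exists_isExtremalFree hF n
  refine (exN_le_choose F n).lt_of_ne fun heq => hfree (isCopyIn_of_card_le (hH ▸ hn) fun _ => ?_)
  refine (eq_of_subset_of_card_le H.edges_subset_powersetCard ?_).symm.subset
  rw [card_powersetCard, hH, hcard, heq]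

/-- Averaging `e(H - x)` over the vertices `x` of an extremal graph `H`. -/
lemma sub_mul_exN_le {F : HGraph r} (hF : F.edges.Nonempty) (n : ℕ) :
    (n - r) * exN r n F ≤ n * exN r (n - 1) F := by
  obtain ⟨H, hH, hfree, hcard⟩ := exists_isExtremalFree hF n
  have hdel : ∀ x ∈ H.verts, #{e ∈ H.edges | x ∉ e} ≤ exN r (n - 1) F := fun x hx => by
    have := card_edges_le_exN (fun h => hfree h.of_deleteVert : ¬ F.IsCopyIn (H.deleteVert x))
    rwa [deleteVert_edges, deleteVert, ofEdges, card_erase_of_mem hx, hH] at this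
  calc (n - r) * exN r n F = ∑ e ∈ H.edges, #{x ∈ H.verts | x ∉ e} := by
        rw [← hcard, mul_comm, ← smul_eq_mul, ← sum_const]
        refine sum_congr rfl fun e he => ?_
        rw [filter_not, filter_mem_eq_inter, inter_eq_right.2 (H.edges_sub e he),
          card_sdiff_of_subset (H.edges_sub e he), hH, H.edges_card e he]
    _ = ∑ x ∈ H.verts, #{e ∈ H.edges | x ∉ e} :=
        (sum_card_bipartiteAbove_eq_sum_card_bipartiteBelow (fun x e => x ∉ e)).symm
    _ ≤ ∑ _x ∈ H.verts, exN r (n - 1) F := sum_le_sum hdel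
    _ = n * exN r (n - 1) F := by rw [sum_const, hH, smul_eq_mul]

lemma exN_div_choose_le_of_le {F : HGraph r} (hF : F.edges.Nonempty) {n₀ n : ℕ} (hr : r ≤ n₀)
    (h : n₀ ≤ n) : (exN r n F : ℝ) / n.choose r ≤ exN r n₀ F / n₀.choose r := by
  induction n, h using Nat.le_induction with
  | base => rfl
  | succ k hk ih =>
    refine le_trans ?_ ih
    have hCk : (0 : ℝ) < k.choose r := by exact_mod_cast Nat.choose_pos (hr.trans hk)
    have hCk' : (0 : ℝ) < (k + 1).choose r := by exact_mod_cast Nat.choose_pos (by omega)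
    rw [div_le_div_iff₀ hCk' hCk]
    have key : exN r (k + 1) F * k.choose r * (k + 1) ≤ exN r k F * (k + 1).choose r * (k + 1) :=
      calc exN r (k + 1) F * k.choose r * (k + 1)
          = (k + 1).choose r * ((k + 1 - r) * exN r (k + 1) F) := by
            rw [mul_assoc, Nat.choose_mul_succ_eq]; ring
        _ ≤ (k + 1).choose r * ((k + 1) * exN r k F) := by
            exact Nat.mul_le_mul_left _ (by simpa using sub_mul_exN_le hF (k + 1))
        _ = exN r k F * (k + 1).choose r * (k + 1) := by ring
    exact_mod_cast Nat.le_of_mul_le_mul_right key k.succ_pos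

end TuranNumber

lemma mul_choose_sub_one (n : ℕ) {k : ℕ} (hk : 1 ≤ k) :
    n * (n - 1).choose (k - 1) = n.choose k * k := by
  obtain ⟨k, rfl⟩ := Nat.exists_eq_add_of_le' hk
  cases n with
  | zero => simp
  | succ n => simpa using Nat.add_one_mul_choose_eq n k

lemma mul_choose_le_mul_choose {r k n : ℕ} (hr : 1 ≤ r) (h : k ≤ n) :
    n * k.choose r ≤ k * n.choose r := by
  refine Nat.le_of_mul_le_mul_right ?_ hr
  calc n * k.choose r * r = n * (k * (k - 1).choose (r - 1)) := by
        rw [mul_choose_sub_one k hr]; ring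
    _ ≤ k * (n * (n - 1).choose (r - 1)) := by
        rw [mul_left_comm]
        exact Nat.mul_le_mul_left _ (Nat.mul_le_mul_left _ (Nat.choose_le_choose _ (by omega)))
    _ = k * n.choose r * r := by rw [mul_choose_sub_one n hr]; ring

section TuranDensity

variable {r : ℕ} {F : HGraph r} {π : ℝ}

lemma HasTuranDensity.nonneg (hπ : HasTuranDensity r F π) : 0 ≤ π :=
  ge_of_tendsto' hπ fun _ => by positivity

lemma HasTuranDensity.le_one (hπ : HasTuranDensity r F π) : π ≤ 1 :=
  le_of_tendsto' hπ fun n =>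
    div_le_one_of_le₀ (by exact_mod_cast exN_le_choose F n) (by positivity)

lemma HasTuranDensity.lt_one (hπ : HasTuranDensity r F π) (hF : F.edges.Nonempty) : π < 1 := by
  set n₀ := max #F.verts r
  have hC : (0 : ℝ) < n₀.choose r := by exact_mod_cast Nat.choose_pos (le_max_right _ _)
  calc π ≤ exN r n₀ F / n₀.choose r := le_of_tendsto hπ <| eventually_atTop.2
        ⟨n₀, fun n hn => exN_div_choose_le_of_le hF (le_max_right _ _) hn⟩
    _ < 1 := (div_lt_one hC).2 (by exact_mod_cast exN_lt_choose hF (le_max_left _ _))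

lemma HasTuranDensity.eventually_abs_sub_le (hπ : HasTuranDensity r F π) {η : ℝ} (hη : 0 < η) :
    ∀ᶠ n : ℕ in atTop, |(exN r n F : ℝ) - π * n.choose r| ≤ η * n.choose r := by
  filter_upwards [hπ.eventually (Metric.closedBall_mem_nhds π hη), eventually_ge_atTop r]
    with n hn hrn
  have hC : (0 : ℝ) < n.choose r := by exact_mod_cast Nat.choose_pos hrn
  rw [Real.dist_eq] at hn
  calc |(exN r n F : ℝ) - π * n.choose r| = |exN r n F / n.choose r - π| * n.choose r := by
        rw [← abs_of_pos hC, ← abs_mul, abs_of_pos hC, sub_mul, div_mul_cancel₀ _ hC.ne']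
    _ ≤ η * n.choose r := by gcongr

lemma HasTuranDensity.eventually_le_dN (hπ : HasTuranDensity r F π) (hr : 1 ≤ r) {η : ℝ}
    (hη : 0 < η) :
    ∀ᶠ n : ℕ in atTop, (π - η) * (((n - 1).choose (r - 1) : ℕ) : ℝ) ≤ dN r n F := by
  filter_upwards [hπ.eventually_abs_sub_le hη, eventually_ge_atTop 1] with n hn h1
  have hid : (n : ℝ) * (n - 1).choose (r - 1) = n.choose r * r := by
    exact_mod_cast mul_choose_sub_one n hr
  rw [dN, le_div_iff₀ (by exact_mod_cast h1), mul_assoc, mul_comm _ (n : ℝ), hid]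
  nlinarith [(abs_le.1 hn).1, (r.cast_nonneg : (0 : ℝ) ≤ r)]

end TuranDensity

namespace Pattern

variable {r : ℕ}

def blowup (P : Pattern r) (part : ℕ → ℕ) (V : Finset ℕ) : HGraph r :=
  HGraph.ofEdges r V {e ∈ powersetCard r V | e.val.map part ∈ P.mE}

lemma isConstruction_blowup (P : Pattern r) {part : ℕ → ℕ} {V : Finset ℕ}
    (h : ∀ v ∈ V, part v ∈ P.idx) : P.IsConstruction (P.blowup part V) :=
  ⟨part, h, fun e => by simp [blowup, ofEdges, mem_powersetCard]; tauto⟩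

lemma IsSubconstruction.mono {P : Pattern r} (hP : P.idx.Nonempty) {G H : HGraph r}
    (hH : P.IsSubconstruction H) (hE : G.edges ⊆ H.edges) : P.IsSubconstruction G := by
  classical
  obtain ⟨K, ⟨part, hpart, hK⟩, -, hHK⟩ := hH
  obtain ⟨i₀, hi₀⟩ := hP
  let part' : ℕ → ℕ := fun v => if v ∈ K.verts then part v else i₀
  refine ⟨P.blowup part' (K.verts ∪ G.verts), P.isConstruction_blowup fun v _ => ?_,
    subset_union_right, fun e he => ?_⟩
  · by_cases hv : v ∈ K.verts <;> simp [part', hv, hpart, hi₀]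
  · obtain ⟨heK, hcard, hmap⟩ := (hK e).1 (hHK (hE he))
    have hmap' : e.val.map part' = e.val.map part :=
      Multiset.map_congr rfl fun v hv => if_pos (heK hv)
    simp [blowup, ofEdges, mem_powersetCard, hcard, hmap', hmap, heK.trans subset_union_left]

end Pattern

lemma IsTuranPair.idx_nonempty {r : ℕ} {F : HGraph r} {P : Pattern r} (hTP : IsTuranPair r F P)
    (hF : F.edges.Nonempty) : P.idx.Nonempty := by
  obtain ⟨H, hH, hfree, hcard⟩ := exists_isExtremalFree hF 1
  obtain ⟨part, hpart, -⟩ := hTP.2 H hfree (hH ▸ hcard)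
  obtain ⟨v, hv⟩ := card_pos.1 (hH ▸ one_pos)
  exact ⟨part v, hpart v hv⟩

namespace HGraph

variable {r : ℕ}

noncomputable def surplus (H : HGraph r) (a : ℝ) (W : Finset ℕ) : ℝ :=
  #(H.induce W).edges - a * (#W).choose r

lemma card_edges_induce_eq (H : HGraph r) (W : Finset ℕ) (v : ℕ) :
    #(H.induce W).edges = #(H.induce (W.erase v)).edges + (H.induce W).deg v := by
  have : (H.induce (W.erase v)).edges = {e ∈ (H.induce W).edges | v ∉ e} := by
    simp only [induce_edges, filter_filter, subset_erase]
  rw [this, deg, add_comm, card_filter_add_card_filter_not]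

lemma surplus_le_surplus_erase (H : HGraph r) (hr : 1 ≤ r) {a : ℝ} {W : Finset ℕ} {v : ℕ}
    (hv : v ∈ W) (hlow : ((H.induce W).deg v : ℝ) ≤ a * (#W - 1).choose (r - 1)) :
    H.surplus a W ≤ H.surplus a (W.erase v) := by
  have hpascal : ((#W).choose r : ℝ) = (#W - 1).choose (r - 1) + (#W - 1).choose r := by
    obtain ⟨k, hk⟩ := Nat.exists_eq_add_of_le' (card_pos.2 ⟨v, hv⟩)
    obtain ⟨s, rfl⟩ := Nat.exists_eq_add_of_le' hr
    rw [hk]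
    exact_mod_cast Nat.choose_succ_succ' k s
  have hcard := congrArg (Nat.cast : ℕ → ℝ) (H.card_edges_induce_eq W v)
  push_cast at hcard
  rw [surplus, surplus, card_erase_of_mem hv, hcard, hpascal]
  linarith

/-- Greedily delete vertices `v ≠ u` of degree below `a·C(|W|-1, r-1)`, but not below `s`
vertices. -/
lemma exists_subset_surplus_le (H : HGraph r) (hr : 1 ≤ r) (a : ℝ) {u s : ℕ} (W₀ : Finset ℕ)
    (hu : u ∈ W₀) (hs : s ≤ #W₀) :
    ∃ W ⊆ W₀, u ∈ W ∧ s ≤ #W ∧ H.surplus a W₀ ≤ H.surplus a W ∧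
      (#W = s ∨ ∀ v ∈ W, v ≠ u → a * (#W - 1).choose (r - 1) ≤ ((H.induce W).deg v : ℝ)) := by
  induction W₀ using Finset.strongInduction with
  | H W₀ ih =>
    by_cases hstop : #W₀ = s ∨
        ∀ v ∈ W₀, v ≠ u → a * (#W₀ - 1).choose (r - 1) ≤ ((H.induce W₀).deg v : ℝ)
    · exact ⟨W₀, subset_rfl, hu, hs, le_rfl, hstop⟩
    push Not at hstop
    obtain ⟨hne, v, hv, hvu, hlow⟩ := hstop
    obtain ⟨W, hW, huW, hsW, hsur, hdone⟩ := ih (W₀.erase v) (erase_ssubset hv)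
      (mem_erase.2 ⟨hvu.symm, hu⟩) (by rw [card_erase_of_mem hv]; omega)
    exact ⟨W, hW.trans (erase_subset v W₀), huW, hsW,
      (H.surplus_le_surplus_erase hr hv hlow.le).trans hsur, hdone⟩

lemma exists_subset_lt_card_le_deg_induce {F G : HGraph r} (hr : 1 ≤ r)
    (hfree : ¬ F.IsCopyIn G) {u : ℕ} (hu : u ∈ G.verts) {a : ℝ} {s : ℕ} (hs : s ≤ #G.verts)
    (hgap : (exN r s F : ℝ) - a * s.choose r < #G.edges - a * (#G.verts).choose r) :
    ∃ W ⊆ G.verts, u ∈ W ∧ s < #W ∧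
      ∀ v ∈ W, v ≠ u → a * (#W - 1).choose (r - 1) ≤ ((G.induce W).deg v : ℝ) := by
  obtain ⟨W, hWV, huW, hsW, hsur, hdone⟩ := G.exists_subset_surplus_le hr a G.verts hu hs
  have hWs : #W ≠ s := by
    intro hWs
    have hex := card_edges_le_exN (fun h => hfree h.of_induce : ¬ F.IsCopyIn (G.induce W))
    rw [card_verts_induce G hWV, hWs] at hex
    rw [surplus, surplus, induce_verts_self, hWs] at hsur
    have : ((#(G.induce W).edges : ℕ) : ℝ) ≤ exN r s F := by exact_mod_cast hex
    linarith
  exact ⟨W, hWV, huW, lt_of_le_of_ne hsW (Ne.symm hWs), hdone.resolve_left hWs⟩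

lemma card_filter_superset_le (H : HGraph r) {S : Finset ℕ} (hS : S ⊆ H.verts) :
    #{e ∈ H.edges | S ⊆ e} ≤ (#H.verts - #S).choose (r - #S) := by
  calc #{e ∈ H.edges | S ⊆ e} ≤ #((powersetCard (r - #S) (H.verts \ S)).image (· ∪ S)) := by
        refine card_le_card fun e he => ?_
        obtain ⟨heH, hSe⟩ := mem_filter.1 he
        refine mem_image.2 ⟨e \ S, mem_powersetCard.2 ⟨sdiff_subset_sdiff (H.edges_sub e heH)
          subset_rfl, ?_⟩, sdiff_union_of_subset hSe⟩
        rw [card_sdiff_of_subset hSe, H.edges_card e heH]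
    _ ≤ (#H.verts - #S).choose (r - #S) := by
        rw [← card_sdiff_of_subset hS, ← card_powersetCard]
        exact card_image_le

/-- Each of the `|V| - |W|` vertices outside `W` lies in at most `C(|V|-2, r-2)` edges through
`u`, and `(|V|-1)·C(|V|-2, r-2) = (r-1)·C(|V|-1, r-1)`. -/
lemma card_filter_mem_not_subset_mul_le (H : HGraph r) {u : ℕ} {W : Finset ℕ} (hu : u ∈ W)
    (hW : W ⊆ H.verts) :
    #{e ∈ H.edges | u ∈ e ∧ ¬ e ⊆ W} * (#H.verts - 1) ≤
      (#H.verts - #W) * (r - 1) * (#H.verts - 1).choose (r - 1) := by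
  rcases Nat.lt_or_ge r 2 with hr | hr
  · rw [filter_false_of_mem, card_empty, zero_mul]
    · exact Nat.zero_le _
    rintro e he ⟨hue, hnot⟩
    have hle : #e ≤ 1 := by rw [H.edges_card e he]; omega
    exact hnot fun x hx => card_le_one.1 hle x hx u hue ▸ hu
  have hcodeg : ∀ x ∈ H.verts \ W, #{e ∈ H.edges | {u, x} ⊆ e} ≤ (#H.verts - 2).choose (r - 2) := by
    intro x hx
    obtain ⟨hxV, hxW⟩ := mem_sdiff.1 hx
    have hux : u ≠ x := fun h => hxW (h ▸ hu)
    simpa [card_pair hux] using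
      H.card_filter_superset_le (insert_subset (hW hu) (singleton_subset_iff.2 hxV))
  have hsub : {e ∈ H.edges | u ∈ e ∧ ¬ e ⊆ W} ⊆
      (H.verts \ W).biUnion fun x => {e ∈ H.edges | {u, x} ⊆ e} := by
    intro e he
    obtain ⟨heH, hue, hnot⟩ := mem_filter.1 he
    obtain ⟨x, hxe, hxW⟩ := not_subset.1 hnot
    exact mem_biUnion.2 ⟨x, mem_sdiff.2 ⟨H.edges_sub e heH hxe, hxW⟩,
      mem_filter.2 ⟨heH, insert_subset hue (singleton_subset_iff.2 hxe)⟩⟩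
  have hid := mul_choose_sub_one (#H.verts - 1) (k := r - 1) (by omega)
  rw [show #H.verts - 1 - 1 = #H.verts - 2 by omega, show r - 1 - 1 = r - 2 by omega] at hid
  calc #{e ∈ H.edges | u ∈ e ∧ ¬ e ⊆ W} * (#H.verts - 1)
      ≤ #(H.verts \ W) * (#H.verts - 2).choose (r - 2) * (#H.verts - 1) :=
        Nat.mul_le_mul_right _ ((card_le_card hsub).trans (card_biUnion_le_card_mul _ _ _ hcodeg))
    _ = (#H.verts - #W) * (r - 1) * (#H.verts - 1).choose (r - 1) := by
        rw [card_sdiff_of_subset hW, mul_assoc, mul_comm _ (#H.verts - 1), hid]; ring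

lemma deg_eq_deg_induce_add (H : HGraph r) (W : Finset ℕ) (u : ℕ) :
    H.deg u = (H.induce W).deg u + #{e ∈ H.edges | u ∈ e ∧ ¬ e ⊆ W} := by
  rw [deg, deg_induce, ← card_filter_add_card_filter_not (s := {e ∈ H.edges | u ∈ e}) (· ⊆ W),
    filter_filter, filter_filter]
  simp only [and_comm]

lemma deg_le_deg_induce_add (H : HGraph r) (hr : 1 ≤ r) {u : ℕ} {W : Finset ℕ} (hu : u ∈ W)
    (hW : W ⊆ H.verts) (hH : 1 < #H.verts) {T : ℕ} {β : ℝ} (hT : #H.verts - T < #W)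
    (hβ : (T : ℝ) * (r - 1) ≤ β * (#H.verts - 1)) :
    (H.deg u : ℝ) ≤ (H.induce W).deg u + β * (#H.verts - 1).choose (r - 1) := by
  set L := #{e ∈ H.edges | u ∈ e ∧ ¬ e ⊆ W}
  set C : ℝ := ↑((#H.verts - 1).choose (r - 1))
  have hL : L * (#H.verts - 1) ≤ T * (r - 1) * (#H.verts - 1).choose (r - 1) :=
    (H.card_filter_mem_not_subset_mul_le hu hW).trans (by gcongr; omega)
  have hL' : (L : ℝ) * (#H.verts - 1) ≤ T * (r - 1) * C := by
    have := Nat.cast_le (α := ℝ) |>.2 hL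
    push_cast [Nat.cast_sub hr, Nat.cast_sub hH.le] at this
    exact this
  have hpos : (0 : ℝ) < #H.verts - 1 := by
    rw [sub_pos]; exact_mod_cast hH
  have hLC : (L : ℝ) ≤ β * C := by
    refine le_of_mul_le_mul_right ?_ hpos
    calc (L : ℝ) * (#H.verts - 1) ≤ T * (r - 1) * C := hL'
      _ ≤ β * (#H.verts - 1) * C := by gcongr
      _ = β * C * (#H.verts - 1) := by ring
  rw [H.deg_eq_deg_induce_add W u]
  push_cast
  linarith

def withStar (H' H : HGraph r) (hH' : H'.edges ⊆ H.edges) (u : ℕ) : HGraph r where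
  verts := H.verts
  edges := H'.edges ∪ {e ∈ H.edges | u ∈ e}
  edges_sub e he := H.edges_sub e (union_subset hH' (filter_subset _ _) he)
  edges_card e he := H.edges_card e (union_subset hH' (filter_subset _ _) he)

lemma IsCopyIn.of_withStar {F H' H : HGraph r} {hH' : H'.edges ⊆ H.edges} {u : ℕ}
    (hF : F.IsCopyIn (H'.withStar H hH' u)) : F.IsCopyIn H :=
  hF.mono subset_rfl (union_subset hH' (filter_subset _ _))

lemma deg_withStar {H' H : HGraph r} (hH' : H'.edges ⊆ H.edges) (u : ℕ) :
    (H'.withStar H hH' u).deg u = H.deg u := by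
  simp only [withStar, deg, filter_union, filter_filter, and_self]
  congr 1
  exact union_eq_right.2 fun e he => mem_filter.2 ⟨hH' (mem_filter.1 he).1, (mem_filter.1 he).2⟩

lemma edges_deleteVert_induce_withStar_subset {H' H : HGraph r} (hH' : H'.edges ⊆ H.edges)
    (u : ℕ) (W : Finset ℕ) : (((H'.withStar H hH' u).induce W).deleteVert u).edges ⊆ H'.edges :=
  fun e he => by
    simp only [withStar, deleteVert_edges, induce_edges, mem_filter] at he
    obtain ⟨⟨heG, -⟩, hue⟩ := he
    exact (mem_union.1 heG).resolve_right fun h => hue (mem_filter.1 h).2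

end HGraph

section Degree

variable {r : ℕ}

lemma exists_clean_withStar {F H H' : HGraph r} {P : Pattern r} (hr : 1 ≤ r)
    (hP : P.idx.Nonempty) {π ζ δ : ℝ} {n T u : ℕ} (hn : 1 < n)
    (hgap : (exN r (n - T) F : ℝ) - (π - ζ) * (n - T).choose r < (ζ - δ) * n.choose r)
    (hloss : (T : ℝ) * (r - 1) ≤ ζ / 2 * (n - 1))
    (hH : #H.verts = n) (hfree : ¬ F.IsCopyIn H) (hu : u ∈ H.verts)
    (hH'H : H'.edges ⊆ H.edges) (hH'P : P.IsSubconstruction H')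
    (hH' : (π - δ) * n.choose r ≤ #H'.edges)
    (hdeg : (π - ζ / 2) * (((n - 1).choose (r - 1) : ℕ) : ℝ) < H.deg u) :
    ∃ K : HGraph r, n - T < #K.verts ∧ #K.verts ≤ n ∧ ¬ F.IsCopyIn K ∧ u ∈ K.verts ∧
      (π - ζ) * (((#K.verts - 1).choose (r - 1) : ℕ) : ℝ) ≤ K.minDeg ∧
      P.IsSubconstruction (K.deleteVert u) ∧
      (H.deg u : ℝ) ≤ K.deg u + ζ / 2 * (((n - 1).choose (r - 1) : ℕ) : ℝ) := by
  set G := H'.withStar H hH'H u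
  have hG : #G.verts = n := hH
  have hGE : (#H'.edges : ℝ) ≤ #G.edges := by exact_mod_cast card_le_card subset_union_left
  obtain ⟨W, hWV, huW, hTW, hWdeg⟩ := exists_subset_lt_card_le_deg_induce (G := G) hr
    (fun h => hfree h.of_withStar) hu (a := π - ζ) (s := n - T) (by omega)
    (by rw [hG]; linarith)
  set K := G.induce W
  have hK : #K.verts = #W := G.card_verts_induce hWV
  have hKu : (H.deg u : ℝ) ≤ K.deg u + ζ / 2 * (((n - 1).choose (r - 1) : ℕ) : ℝ) := by
    have := G.deg_le_deg_induce_add hr huW hWV (β := ζ / 2) (T := T)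
      (by rwa [hG]) (by rwa [hG]) (by rwa [hG])
    rwa [deg_withStar, hG] at this
  have hCW : (((#W - 1).choose (r - 1) : ℕ) : ℝ) ≤ ((n - 1).choose (r - 1) : ℕ) := by
    have : #W ≤ n := hG ▸ card_le_card hWV
    exact Nat.cast_le.2 (Nat.choose_le_choose _ (by omega))
  have huK : u ∈ K.verts := mem_inter.2 ⟨hu, huW⟩
  refine ⟨K, by omega, by rw [hK]; exact hG ▸ card_le_card hWV,
    fun h => hfree h.of_induce.of_withStar, huK, le_minDeg ⟨u, huK⟩ fun v hv => ?_,
    hH'P.mono hP (edges_deleteVert_induce_withStar_subset hH'H u W), hKu⟩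
  rw [hK]
  rcases eq_or_ne v u with rfl | hvu
  · rcases le_total 0 (π - ζ) with h | h
    · calc (π - ζ) * (((#W - 1).choose (r - 1) : ℕ) : ℝ)
          ≤ (π - ζ) * ((n - 1).choose (r - 1) : ℕ) := by gcongr
        _ ≤ K.deg v := by linarith
    · exact (mul_nonpos_of_nonpos_of_nonneg h (by positivity)).trans (by positivity)
  · exact hWdeg v (mem_inter.1 hv).2 hvu

lemma deg_le_of_isSubconstruction {F H H' : HGraph r} {P : Pattern r} (hr : 1 ≤ r)
    (hP : P.idx.Nonempty) {π ζ δ a : ℝ} {Nw n T u : ℕ} (hζ : 0 ≤ ζ) (ha : 0 ≤ a) (hπa : π ≤ a)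
    (hWVE : ∀ G : HGraph r, Nw ≤ #G.verts → ¬ F.IsCopyIn G →
      (π - ζ) * (((#G.verts - 1).choose (r - 1) : ℕ) : ℝ) ≤ G.minDeg →
      ∀ v ∈ G.verts, P.IsSubconstruction (G.deleteVert v) →
        (G.deg v : ℝ) ≤ a * (((#G.verts - 1).choose (r - 1) : ℕ) : ℝ))
    (hn : 1 < n) (hNw : Nw ≤ n - T)
    (hgap : (exN r (n - T) F : ℝ) - (π - ζ) * (n - T).choose r < (ζ - δ) * n.choose r)
    (hloss : (T : ℝ) * (r - 1) ≤ ζ / 2 * (n - 1))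
    (hH : #H.verts = n) (hfree : ¬ F.IsCopyIn H) (hu : u ∈ H.verts)
    (hH'H : H'.edges ⊆ H.edges) (hH'P : P.IsSubconstruction H')
    (hH' : (π - δ) * n.choose r ≤ #H'.edges) :
    (H.deg u : ℝ) ≤ (a + ζ / 2) * (((n - 1).choose (r - 1) : ℕ) : ℝ) := by
  by_cases hsmall : (H.deg u : ℝ) ≤ (π - ζ / 2) * (((n - 1).choose (r - 1) : ℕ) : ℝ)
  · exact hsmall.trans (by gcongr; linarith)
  push Not at hsmall
  obtain ⟨K, hTK, hKn, hfreeK, huK, hmin, hdel, hKu⟩ :=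
    exists_clean_withStar hr hP hn hgap hloss hH hfree hu hH'H hH'P hH' hsmall
  have hext := hWVE K (by omega) hfreeK hmin u huK hdel
  calc (H.deg u : ℝ) ≤ K.deg u + ζ / 2 * (((n - 1).choose (r - 1) : ℕ) : ℝ) := hKu
    _ ≤ a * ((n - 1).choose (r - 1) : ℕ) + ζ / 2 * (((n - 1).choose (r - 1) : ℕ) : ℝ) := by
        gcongr
        exact hext.trans (by gcongr)
    _ = (a + ζ / 2) * (((n - 1).choose (r - 1) : ℕ) : ℝ) := by ring

lemma choose_sub_le_one_sub_mul (hr : 1 ≤ r) {n T : ℕ} (hn : 0 < n) (hTn : T ≤ n) {α : ℝ}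
    (hT : α * n ≤ T) : ((n - T).choose r : ℝ) ≤ (1 - α) * n.choose r := by
  have hdecay : (n : ℝ) * (n - T).choose r ≤ (n - T : ℕ) * n.choose r := by
    exact_mod_cast mul_choose_le_mul_choose hr (Nat.sub_le n T)
  rw [Nat.cast_sub hTn] at hdecay
  have hC : (0 : ℝ) ≤ n.choose r := by positivity
  refine le_of_mul_le_mul_left (hdecay.trans ?_) (by exact_mod_cast hn : (0 : ℝ) < n)
  nlinarith

lemma eventually_exists_deletion_count (hr : 1 ≤ r) {ζ : ℝ} (hζ : 0 < ζ) (hζ1 : ζ ≤ 1) (N : ℕ) :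
    ∀ᶠ n : ℕ in atTop, ∃ T : ℕ, N ≤ n - T ∧
      (ζ + ζ ^ 2 / (32 * r)) * (n - T).choose r < (ζ - ζ ^ 2 / (32 * r)) * n.choose r ∧
      (T : ℝ) * (r - 1) ≤ ζ / 2 * (n - 1) := by
  have hr' : (1 : ℝ) ≤ r := by exact_mod_cast hr
  set α := ζ / (8 * r)
  have hα : 0 < α := by positivity
  have hα' : α ≤ 1 / 8 := by
    rw [div_le_iff₀ (by positivity)]; nlinarith
  filter_upwards [eventually_ge_atTop (2 * N + r + 2), eventually_ge_atTop ⌈α⁻¹⌉₊] with n hn hnα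
  have hαn : 1 ≤ α * n :=
    calc 1 = α * α⁻¹ := (mul_inv_cancel₀ hα.ne').symm
      _ ≤ α * n := by gcongr; exact Nat.ceil_le.1 hnα
  set T := ⌈α * n⌉₊
  have hT₁ : α * n ≤ T := Nat.le_ceil _
  have hT₂ : (T : ℝ) ≤ 2 * α * n := by linarith [Nat.ceil_lt_add_one (by positivity : 0 ≤ α * n)]
  have hn2 : (2 : ℝ) ≤ n := by exact_mod_cast (by omega : 2 ≤ n)
  have hTn : 2 * T ≤ n := by exact_mod_cast (show ((2 * T : ℕ) : ℝ) ≤ n by push_cast; nlinarith)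
  have hC : (0 : ℝ) < n.choose r := by exact_mod_cast Nat.choose_pos (by omega)
  have hshrink := choose_sub_le_one_sub_mul hr (by omega) (by omega) hT₁
  have hδ : ζ ^ 2 / (32 * r) = ζ * α / 4 := by simp only [α]; field_simp; ring
  refine ⟨T, by omega, ?_, ?_⟩
  · rw [hδ]
    calc (ζ + ζ * α / 4) * ((n - T).choose r : ℝ) ≤ (ζ + ζ * α / 4) * ((1 - α) * n.choose r) := by
          gcongr
      _ < (ζ - ζ * α / 4) * n.choose r := by nlinarith [mul_pos (mul_pos hζ hα) hC]
  · have hαr : α * r = ζ / 8 := by simp only [α]; field_simp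
    nlinarith

lemma eventually_deg_le {F : HGraph r} {P : Pattern r} (hr : 1 ≤ r)
    (hP : P.idx.Nonempty) {π : ℝ} (hπ : HasTuranDensity r F π) (hes : EdgeStable r F P π)
    (hwve : WeaklyVertexExtendable r F P π) {ε : ℝ} (hε : 0 < ε) :
    ∃ c : ℝ, 0 < c ∧ ∀ᶠ n : ℕ in atTop, ∀ H : HGraph r, #H.verts = n → ¬ F.IsCopyIn H →
      (exN r n F : ℝ) - c * n.choose r ≤ #H.edges →
      ∀ u ∈ H.verts, (H.deg u : ℝ) ≤ (π + ε) * (((n - 1).choose (r - 1) : ℕ) : ℝ) := by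
  obtain ⟨Nw, ζw, hζw, hWVE⟩ := hwve (ε / 2) (half_pos hε)
  set ζ := min ζw (min (ε / 2) 1)
  have hζ : 0 < ζ := lt_min hζw (lt_min (half_pos hε) one_pos)
  have hζε : ζ ≤ ε / 2 := (min_le_right _ _).trans (min_le_left _ _)
  set δ := ζ ^ 2 / (32 * r)
  obtain ⟨Ne, ζe, hζe, hES⟩ := hes δ (by positivity)
  set η := min δ (ζe / 2)
  obtain ⟨N₁, hN₁⟩ := eventually_atTop.1
    (hπ.eventually_abs_sub_le (lt_min (by positivity) (half_pos hζe) : 0 < η))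
  refine ⟨ζe / 2, half_pos hζe, ?_⟩
  filter_upwards [eventually_exists_deletion_count hr hζ ((min_le_right _ _).trans
    (min_le_right _ _)) (max N₁ Nw), eventually_ge_atTop (max Ne (max N₁ 2))]
    with n ⟨T, hT, hshrink, hloss⟩ hn H hH hfree hE u hu
  have hexn := (abs_le.1 (hN₁ n (by omega))).1
  have hexT := (abs_le.1 (hN₁ (n - T) (by omega))).2
  have hηδ : η ≤ δ := min_le_left _ _
  have hηζ : η ≤ ζe / 2 := min_le_right _ _
  have hC : (0 : ℝ) ≤ n.choose r := by positivity
  have hCT : (0 : ℝ) ≤ (n - T).choose r := by positivity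
  obtain ⟨H', -, hH'H, hH', hH'P⟩ := hES H (by omega) hfree (by rw [hH]; nlinarith)
  rw [hH] at hH'
  have hgap : (exN r (n - T) F : ℝ) - (π - ζ) * (n - T).choose r < (ζ - δ) * n.choose r :=
    lt_of_le_of_lt (by nlinarith) hshrink
  refine (deg_le_of_isSubconstruction hr hP hζ.le (by linarith [hπ.nonneg]) (by linarith)
    (fun G hG hG' hmin => hWVE G hG hG' (le_trans (by gcongr; exact min_le_left _ _) hmin))
    (by omega) (by omega) hgap hloss hH hfree hu hH'H hH'P hH').trans ?_
  gcongr ?_ * _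
  linarith

end Degree

lemma HGraph.deg_eq_zero_of_rank_zero (H : HGraph 0) (v : ℕ) : H.deg v = 0 :=
  card_eq_zero.2 <| filter_false_of_mem fun e he hv => by
    simp [card_eq_zero.1 (H.edges_card e he)] at hv

lemma exN_sub_le_card_edges_of_avgDeg {r : ℕ} {F H : HGraph r} (hr : 1 ≤ r) {n : ℕ} (hn : 1 ≤ n)
    (hH : #H.verts = n) {c : ℝ}
    (havg : dN r n F - c * (((n - 1).choose (r - 1) : ℕ) : ℝ) ≤ H.avgDeg) :
    (exN r n F : ℝ) - c * n.choose r ≤ #H.edges := by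
  have hid : (n : ℝ) * (n - 1).choose (r - 1) = n.choose r * r := by
    exact_mod_cast mul_choose_sub_one n hr
  have hn0 : (0 : ℝ) < n := by exact_mod_cast hn
  rw [dN, avgDeg, hH] at havg
  have key : (n : ℝ) * (r * exN r n F / n - c * (n - 1).choose (r - 1)) =
      r * (exN r n F - c * n.choose r) := by
    field_simp
    linear_combination (-c) * hid
  have h := mul_le_mul_of_nonneg_left havg hn0.le
  rw [key, mul_div_cancel₀ _ hn0.ne'] at h
  exact le_of_mul_le_mul_left h (by exact_mod_cast hr)

theorem statement_3_general (r m : ℕ) (F : HGraph r) (hFm : F.verts.card = m)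
    (P : Pattern r) (hTP : IsTuranPair r F P)
    (π : ℝ) (hπ : HasTuranDensity r F π)
    (hes : EdgeStable r F P π) (hwve : WeaklyVertexExtendable r F P π) :
    ∃ c : ℝ, 0 < c ∧ ∀ᶠ n : ℕ in atTop,
      BoundedAt r n F (c * (((n-1).choose (r-1) : ℕ) : ℝ))
        ((1 - π) / (8 * m) * (((n-1).choose (r-1) : ℕ) : ℝ)) := by
  rcases Nat.eq_zero_or_pos r with rfl | hr
  · have hbound : ∀ n : ℕ, 0 ≤ dN 0 n F + (1 - π) / (8 * m) * (((n-1).choose (0-1) : ℕ) : ℝ) :=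
      fun n => by simpa [dN] using div_nonneg (by linarith [hπ.le_one]) (by positivity)
    exact ⟨1, one_pos, Eventually.of_forall fun n H _ _ _ => maxDeg_le (hbound n) fun v _ => by
      simpa [H.deg_eq_zero_of_rank_zero] using hbound n⟩
  rcases F.edges.eq_empty_or_nonempty with hF | hF
  · exact ⟨1, one_pos, (eventually_ge_atTop m).mono fun n hn H hH hfree _ =>
      absurd (isCopyIn_of_card_le (by omega) (by simp [hF])) hfree⟩
  have hm : 0 < m := by
    obtain ⟨e, he⟩ := hF
    have := card_le_card (F.edges_sub e he)
    rw [F.edges_card e he] at this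
    omega
  set ε := (1 - π) / (8 * m)
  have hε : 0 < ε := div_pos (by linarith [hπ.lt_one hF]) (by positivity)
  obtain ⟨c, hc, hdeg⟩ := eventually_deg_le hr (hTP.idx_nonempty hF) hπ hes hwve (half_pos hε)
  refine ⟨c, hc, ?_⟩
  filter_upwards [hdeg, hπ.eventually_le_dN hr (half_pos hε), eventually_ge_atTop 1]
    with n hdeg hdN hn H hH hfree havg
  have hC : (0 : ℝ) ≤ ((n - 1).choose (r - 1) : ℕ) := by positivity
  refine maxDeg_le (by nlinarith [hπ.nonneg]) fun u hu =>
    (hdeg H hH hfree (exN_sub_le_card_edges_of_avgDeg hr hn hH havg) u hu).trans (by linarith)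

/-- edge-stability plus weak vertex-extendability implies
boundedness. -/
theorem statement_3 (r m : ℕ) (F : HGraph r) (hFm : F.verts.card = m)
    (P : Pattern r) (hmin : P.Minimal) (hTP : IsTuranPair r F P)
    (π : ℝ) (hπ : HasTuranDensity r F π)
    (hes : EdgeStable r F P π) (hwve : WeaklyVertexExtendable r F P π) :
    ∃ c : ℝ, 0 < c ∧ ∀ᶠ n : ℕ in atTop,
      BoundedAt r n F (c * (((n-1).choose (r-1) : ℕ) : ℝ))
        ((1 - π) / (8 * m) * (((n-1).choose (r-1) : ℕ) : ℝ)) :=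
  statement_3_general r m F hFm P hTP π hπ hes hwve

end DensityCH
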